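/- Let d ≥ 1, let λ, μ : ℝ^d → ℝ be continuously differentiable with λ(x) ≥ λ_min > 0 and μ(x) ≥ μ_min > 0 for all x, let p : ℝ^d → ℝ be continuously differentiable, and let w : ℝ^d → ℝ^d be smooth and compactly supported, satisfying pointwise on ℝ^d the equation ∇(λ div w) + ∇·(μ E(w)) = ∇p, where E(w) = ∇w + (∇w)ᵗ. Set P = (∫_{supp w} p(x)² dx)^{1/2}. Then (∫_{ℝ^d} (div w)² dx)^{1/2} ≤ P/λ_min and ∫_{ℝ^d} |∇w(x)|² dx ≤ P²/(μ_min λ_min). -/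

import Mathlib

open MeasureTheory Matrix

/-- Jacobian matrix `(∇v)_{ij} = ∂v_i/∂x_j`. -/
noncomputable def jac {d : ℕ} (u : (Fin d → ℝ) → (Fin d → ℝ)) (x : Fin d → ℝ) :
    Matrix (Fin d) (Fin d) ℝ :=
  Matrix.of fun i j => fderiv ℝ u x (Pi.single j 1) i

/-- `E(v) = ∇v + (∇v)ᵗ`. -/
noncomputable def Ef {d : ℕ} (u : (Fin d → ℝ) → (Fin d → ℝ)) (x : Fin d → ℝ) :
    Matrix (Fin d) (Fin d) ℝ :=
  jac u x + (jac u x)ᵀ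

/-- Divergence `div v = Σ_i ∂v_i/∂x_i`. -/
noncomputable def divg {d : ℕ} (u : (Fin d → ℝ) → (Fin d → ℝ)) (x : Fin d → ℝ) : ℝ :=
  ∑ i, jac u x i i

/-- Gradient of a scalar function. -/
noncomputable def gradf {d : ℕ} (p : (Fin d → ℝ) → ℝ) (x : Fin d → ℝ) : Fin d → ℝ :=
  fun i => fderiv ℝ p x (Pi.single i 1)

/-- Divergence of a matrix field: `(∇·M)_i = Σ_j ∂M_{ij}/∂x_j`. -/
noncomputable def divMat {d : ℕ} (M : (Fin d → ℝ) → Matrix (Fin d) (Fin d) ℝ)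
    (x : Fin d → ℝ) : Fin d → ℝ :=
  fun i => ∑ j, fderiv ℝ (fun y => M y i j) x (Pi.single j 1)

/-- Frobenius inner product `A : B = Σ_{ij} A_{ij} B_{ij}`. -/
def frob {d : ℕ} (A B : Matrix (Fin d) (Fin d) ℝ) : ℝ := ∑ i, ∑ j, A i j * B i j


open Metric

variable {d : ℕ}

local notation "E" => (Fin d → ℝ)

lemma exists_cutoff (K : Set (Fin d → ℝ)) (hK : IsCompact K) :
    ∃ χ : (Fin d → ℝ) → ℝ, ContDiff ℝ 1 χ ∧ HasCompactSupport χ ∧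
      ∃ U : Set (Fin d → ℝ), IsOpen U ∧ K ⊆ U ∧ ∀ x ∈ U, χ x = 1 := by
  obtain ⟨R, hR⟩ := hK.isBounded.subset_closedBall 0
  set f : ContDiffBump (0 : Fin d → ℝ) :=
    ⟨|R| + 1, |R| + 2, by positivity, by linarith⟩
  refine ⟨f, f.contDiff (n:=1), f.hasCompactSupport, ball 0 (|R| + 1), isOpen_ball, ?_, fun x hx => ?_⟩
  · refine hR.trans ((closedBall_subset_ball ?_))
    have : R ≤ |R| := le_abs_self R
    linarith
  · exact f.one_of_mem_closedBall (ball_subset_closedBall hx)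

lemma integral_fderiv_eq_zero {H : (Fin d → ℝ) → ℝ} (hH : ContDiff ℝ 1 H)
    (hc : HasCompactSupport H) (v : Fin d → ℝ) :
    ∫ x, fderiv ℝ H x v = 0 := by
  obtain ⟨χ, hχ, hcχ, U, hU, hKU, hχ1⟩ := exists_cutoff (tsupport H) hc
  obtain ⟨C, hC⟩ := hH.lipschitzWith_of_hasCompactSupport hc one_ne_zero
  obtain ⟨D, hD⟩ := hχ.lipschitzWith_of_hasCompactSupport hcχ one_ne_zero
  have key := hC.integral_lineDeriv_mul_eq (μ := volume) hD hcχ v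
  have h1 : ∀ x, lineDeriv ℝ H x v * χ x = fderiv ℝ H x v := by
    intro x
    rw [(hH.differentiable one_ne_zero x).lineDeriv_eq_fderiv]
    by_cases hx : x ∈ tsupport H
    · rw [hχ1 x (hKU hx), mul_one]
    · have : fderiv ℝ H x = 0 := by
        have h0 : H =ᶠ[nhds x] 0 := by
          filter_upwards [(isOpen_compl_iff.2 (isClosed_tsupport H)).mem_nhds hx] with y hy
          exact image_eq_zero_of_notMem_tsupport hy
        rw [h0.fderiv_eq]
        exact fderiv_const_apply 0
      simp [this]
  have h2 : ∀ x, lineDeriv ℝ χ x (-v) * H x = 0 := by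
    intro x
    by_cases hx : x ∈ tsupport H
    · have h1' : χ =ᶠ[nhds x] (fun _ => 1) := by
        filter_upwards [hU.mem_nhds (hKU hx)] with y hy using hχ1 y hy
      rw [((hχ.differentiable one_ne_zero x).lineDeriv_eq_fderiv), h1'.fderiv_eq]
      simp
    · rw [image_eq_zero_of_notMem_tsupport hx, mul_zero]
  simp only [h1, h2] at key
  simpa using key

lemma ibp {f g : (Fin d → ℝ) → ℝ} (hf : ContDiff ℝ 1 f) (hg : ContDiff ℝ 1 g)
    (hcg : HasCompactSupport g) (v : Fin d → ℝ) :
    ∫ x, fderiv ℝ f x v * g x = - ∫ x, f x * fderiv ℝ g x v := by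
  have hfg : ContDiff ℝ 1 (fun x => f x * g x) := hf.mul hg
  have hcfg : HasCompactSupport (fun x => f x * g x) := hcg.mul_left
  have hz := integral_fderiv_eq_zero hfg hcfg v
  have hder : ∀ x, fderiv ℝ (fun x => f x * g x) x v
      = fderiv ℝ f x v * g x + f x * fderiv ℝ g x v := by
    intro x
    rw [fderiv_fun_mul (hf.differentiable one_ne_zero x) (hg.differentiable one_ne_zero x)]
    simp only [ContinuousLinearMap.add_apply, ContinuousLinearMap.smul_apply, smul_eq_mul]
    ring
  have hint1 : Integrable (fun x => fderiv ℝ f x v * g x) := by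
    apply Continuous.integrable_of_hasCompactSupport
    · exact ((hf.continuous_fderiv one_ne_zero).clm_apply continuous_const).mul hg.continuous
    · exact hcg.mul_left
  have hint2 : Integrable (fun x => f x * fderiv ℝ g x v) := by
    apply Continuous.integrable_of_hasCompactSupport
    · exact hf.continuous.mul ((hg.continuous_fderiv one_ne_zero).clm_apply continuous_const)
    · exact (hcg.fderiv_apply ℝ v).mul_left
  calc ∫ x, fderiv ℝ f x v * g x
      = (∫ x, fderiv ℝ f x v * g x + f x * fderiv ℝ g x v) - ∫ x, f x * fderiv ℝ g x v := by
        rw [integral_add hint1 hint2]; ring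
    _ = - ∫ x, f x * fderiv ℝ g x v := by
        rw [show (∫ x, fderiv ℝ f x v * g x + f x * fderiv ℝ g x v) = 0 from by
          rw [← hz]; exact integral_congr_ae (Filter.Eventually.of_forall fun x => (hder x).symm)]
        ring

lemma fderiv_proj {w : (Fin d → ℝ) → (Fin d → ℝ)} {x : Fin d → ℝ}
    (hw : DifferentiableAt ℝ w x) (i : Fin d) (v : Fin d → ℝ) :
    fderiv ℝ (fun y => w y i) x v = fderiv ℝ w x v i := by
  have h := ((ContinuousLinearMap.proj (R := ℝ) (φ := fun _ : Fin d => ℝ)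
      i).hasFDerivAt (x := w x)).comp x hw.hasFDerivAt
  rw [show (fun y => w y i)
      = (⇑(ContinuousLinearMap.proj (R := ℝ) (φ := fun _ : Fin d => ℝ) i) ∘ w) from rfl,
    h.fderiv]
  rfl

lemma frob_self_nonneg {A : Matrix (Fin d) (Fin d) ℝ} : 0 ≤ frob A A := by
  apply Finset.sum_nonneg; intro i _
  apply Finset.sum_nonneg; intro j _
  exact mul_self_nonneg _

lemma frob_two (A : Matrix (Fin d) (Fin d) ℝ) :
    2 * frob A (A + Aᵀ) = frob (A + Aᵀ) (A + Aᵀ) := by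
  unfold frob
  simp only [Matrix.add_apply, Matrix.transpose_apply]
  have key : ∑ i, ∑ j, (A i j * A i j - A j i * A j i) = 0 := by
    rw [Finset.sum_congr rfl fun i _ => Finset.sum_sub_distrib _ _, Finset.sum_sub_distrib]
    rw [show ∑ i, ∑ j, A j i * A j i = ∑ j, ∑ i, A j i * A j i from Finset.sum_comm]
    exact sub_self _
  calc 2 * ∑ i, ∑ j, A i j * (A i j + A j i)
      = (∑ i, ∑ j, ((A i j + A j i) * (A i j + A j i)
          + (A i j * A i j - A j i * A j i))) := by
        rw [Finset.mul_sum]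
        refine Finset.sum_congr rfl fun i _ => ?_
        rw [Finset.mul_sum]
        exact Finset.sum_congr rfl fun j _ => by ring
    _ = ∑ i, ∑ j, (A i j + A j i) * (A i j + A j i) := by
        rw [Finset.sum_congr rfl fun i _ => Finset.sum_add_distrib,
          Finset.sum_add_distrib, key, add_zero]

lemma frob_Ef_nonneg (A : Matrix (Fin d) (Fin d) ℝ) : 0 ≤ frob A (A + Aᵀ) := by
  have h := frob_two A
  have h2 : (0:ℝ) ≤ frob (A + Aᵀ) (A + Aᵀ) := frob_self_nonneg
  linarith

noncomputable def aent {d : ℕ} (w : (Fin d → ℝ) → (Fin d → ℝ)) (i j : Fin d)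
    (x : Fin d → ℝ) : ℝ :=
  fderiv ℝ (fun y => w y i) x (Pi.single j 1)

section W
variable {w : (Fin d → ℝ) → (Fin d → ℝ)}

lemma wi_contDiff (hw : ContDiff ℝ (⊤ : ℕ∞) w) (i : Fin d) (n : WithTop ℕ∞) (hn : n ≤ ((⊤ : ℕ∞) : WithTop ℕ∞)) :
    ContDiff ℝ n (fun y => w y i) :=
  contDiff_pi.mp (hw.of_le hn) i

lemma wi_compact (hcw : HasCompactSupport w) (i : Fin d) :
    HasCompactSupport (fun y => w y i) :=
  hcw.comp_left (g := fun v : Fin d → ℝ => v i) rfl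

lemma wi_zero (i : Fin d) {x : Fin d → ℝ} (hx : x ∉ tsupport w) : w x i = 0 := by
  have : w x = 0 := image_eq_zero_of_notMem_tsupport hx
  rw [this]; rfl

lemma tsupport_wi (i : Fin d) : tsupport (fun y => w y i) ⊆ tsupport w := by
  apply closure_mono
  intro x hx
  simp only [Function.mem_support] at hx ⊢
  intro h; apply hx; rw [h]; rfl

lemma aent_contDiff (hw : ContDiff ℝ (⊤ : ℕ∞) w) (i j : Fin d) : ContDiff ℝ 1 (aent w i j) := by
  have h := (wi_contDiff hw i 2 (WithTop.coe_le_coe.mpr le_top)).fderiv_right (m := 1) le_rfl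
  exact h.clm_apply contDiff_const

lemma aent_zero (i j : Fin d) {x : Fin d → ℝ} (hx : x ∉ tsupport w) : aent w i j x = 0 := by
  have hx' : x ∉ tsupport (fun y => w y i) := fun h => hx (tsupport_wi i h)
  unfold aent
  rw [fderiv_of_notMem_tsupport (𝕜 := ℝ) hx']
  rfl

lemma jac_aent (hw : ContDiff ℝ (⊤ : ℕ∞) w) (x : Fin d → ℝ) (i j : Fin d) :
    jac w x i j = aent w i j x := by
  unfold jac aent
  rw [fderiv_proj (hw.differentiable (by simp) x) i]
  rfl

lemma integ_helper (hcw : HasCompactSupport w) {f : (Fin d → ℝ) → ℝ}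
    (hf : Continuous f) (h0 : ∀ x, x ∉ tsupport w → f x = 0) : Integrable f := by
  apply hf.integrable_of_hasCompactSupport
  apply IsCompact.of_isClosed_subset hcw isClosed_closure
  apply closure_minimal _ (isClosed_tsupport w)
  intro x hx
  by_contra hxs
  exact hx (h0 x hxs)

end W

section W2
variable {w : (Fin d → ℝ) → (Fin d → ℝ)}

lemma ibp_w (hw : ContDiff ℝ (⊤ : ℕ∞) w) (hcw : HasCompactSupport w)
    {f : (Fin d → ℝ) → ℝ} (hf : ContDiff ℝ 1 f) (i j : Fin d) :
    ∫ x, fderiv ℝ f x (Pi.single j 1) * w x i = - ∫ x, f x * aent w i j x := by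
  simpa [aent] using ibp hf (wi_contDiff hw i 1 (WithTop.coe_le_coe.mpr le_top)) (wi_compact hcw i) (Pi.single j 1)

lemma sndderiv (hw : ContDiff ℝ (⊤ : ℕ∞) w) (i j k : Fin d) (x : Fin d → ℝ) :
    fderiv ℝ (aent w i j) x (Pi.single k 1) = fderiv ℝ (aent w i k) x (Pi.single j 1) := by
  unfold aent
  have hu : ContDiff ℝ 2 (fun y => w y i) := wi_contDiff hw i 2 (WithTop.coe_le_coe.mpr le_top)
  have hdf : DifferentiableAt ℝ (fderiv ℝ (fun y => w y i)) x :=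
    ((hu.fderiv_right (m := 1) le_rfl).differentiable one_ne_zero) x
  rw [show (fun y => fderiv ℝ (fun y => w y i) y (Pi.single j 1))
      = (fun y => (fderiv ℝ (fun y => w y i) y) ((fun _ => (Pi.single j 1 : Fin d → ℝ)) y))
      from rfl,
    fderiv_clm_apply hdf (differentiableAt_const _)]
  rw [show (fun y => fderiv ℝ (fun y => w y i) y (Pi.single k 1))
      = (fun y => (fderiv ℝ (fun y => w y i) y) ((fun _ => (Pi.single k 1 : Fin d → ℝ)) y))
      from rfl,
    fderiv_clm_apply hdf (differentiableAt_const _)]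
  simp only [fderiv_const, fderiv_const_apply, Pi.zero_apply, ContinuousLinearMap.comp_zero, zero_add,
    ContinuousLinearMap.add_apply, ContinuousLinearMap.flip_apply]
  exact (hu.contDiffAt.isSymmSndFDerivAt (by simp)) _ _

lemma cross_ibp (hw : ContDiff ℝ (⊤ : ℕ∞) w) (hcw : HasCompactSupport w) (i j : Fin d) :
    ∫ x, aent w i j x * aent w j i x = ∫ x, aent w i i x * aent w j j x := by
  have h1 := ibp_w hw hcw (aent_contDiff hw j i) i j
  have h2 := ibp_w hw hcw (aent_contDiff hw j j) i i
  have h3 : ∀ x, fderiv ℝ (aent w j i) x (Pi.single j 1)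
      = fderiv ℝ (aent w j j) x (Pi.single i 1) := fun x => sndderiv hw j i j x
  rw [integral_congr_ae (Filter.Eventually.of_forall fun x => by rw [h3 x])] at h1
  rw [h1] at h2
  have h4 := neg_injective h2
  calc ∫ x, aent w i j x * aent w j i x
      = ∫ x, aent w j i x * aent w i j x := by
        exact integral_congr_ae (Filter.Eventually.of_forall fun x => mul_comm _ _)
    _ = ∫ x, aent w j j x * aent w i i x := h4
    _ = ∫ x, aent w i i x * aent w j j x := by
        exact integral_congr_ae (Filter.Eventually.of_forall fun x => mul_comm _ _)

end W2

lemma integ_helper' {S : Set (Fin d → ℝ)} (hS : IsCompact S) (hScl : IsClosed S)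
    {f : (Fin d → ℝ) → ℝ} (hf : Continuous f) (h0 : ∀ x, x ∉ S → f x = 0) :
    Integrable f := by
  apply hf.integrable_of_hasCompactSupport
  apply IsCompact.of_isClosed_subset hS isClosed_closure
  apply closure_minimal _ hScl
  intro x hx
  by_contra hxs
  exact hx (h0 x hxs)

lemma cs_bound {p g : (Fin d → ℝ) → ℝ} (hp : Continuous p) (hg : Continuous g)
    (S : Set (Fin d → ℝ)) (hS : IsCompact S) (hScl : IsClosed S)
    (hg0 : ∀ x, x ∉ S → g x = 0) :
    ∫ x, p x * g x ≤ Real.sqrt (∫ x in S, p x ^ 2) * Real.sqrt (∫ x, g x ^ 2) := by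
  have hSm : MeasurableSet S := hScl.measurableSet
  set q : (Fin d → ℝ) → ℝ := S.indicator p with hq
  have hcg : HasCompactSupport g := by
    apply IsCompact.of_isClosed_subset hS isClosed_closure
    apply closure_minimal _ hScl
    intro x hx
    by_contra hxs
    exact hx (hg0 x hxs)
  have hgL2 : MemLp g (ENNReal.ofReal 2) := by
    rw [show ENNReal.ofReal 2 = 2 by norm_num]
    exact hg.memLp_of_hasCompactSupport hcg
  have hqL2 : MemLp q (ENNReal.ofReal 2) := by
    rw [memLp_indicator_iff_restrict hSm]
    haveI : IsFiniteMeasure (volume.restrict S) :=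
      ⟨by rw [Measure.restrict_apply_univ]; exact hS.measure_lt_top⟩
    obtain ⟨C, hC⟩ := hS.exists_bound_of_continuousOn hp.continuousOn
    apply MemLp.of_bound hp.aestronglyMeasurable C
    exact (ae_restrict_iff' hSm).2 (Filter.Eventually.of_forall fun x hx => hC x hx)
  have hpq : (2:ℝ).HolderConjugate 2 := Real.HolderConjugate.two_two
  have key := integral_mul_norm_le_Lp_mul_Lq (μ := volume) hpq hqL2 hgL2
  have h1 : ∫ x, p x * g x ≤ ∫ x, ‖q x‖ * ‖g x‖ := by
    apply integral_mono
    · apply integ_helper' hS hScl (hp.mul hg) (fun x hx => by rw [Pi.mul_apply, hg0 x hx, mul_zero])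
    · have : (fun x => ‖q x‖ * ‖g x‖) = fun x => ‖p x‖ * ‖g x‖ := by
        funext x
        by_cases hx : x ∈ S
        · rw [hq]; simp [Set.indicator_of_mem hx]
        · rw [hq]; simp [Set.indicator_of_notMem hx, hg0 x hx]
      rw [this]
      exact integ_helper' hS hScl (hp.norm.mul hg.norm)
        (fun x hx => by rw [hg0 x hx]; simp)
    · intro x
      calc p x * g x ≤ |p x * g x| := le_abs_self _
        _ = ‖q x‖ * ‖g x‖ := by
          by_cases hx : x ∈ S
          · rw [hq]; simp [Set.indicator_of_mem hx, abs_mul, Real.norm_eq_abs]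
          · rw [hq]; simp [Set.indicator_of_notMem hx, hg0 x hx]
  have h2 : ∫ x, ‖q x‖ ^ (2:ℝ) ∂volume = ∫ x in S, p x ^ 2 := by
    rw [← integral_indicator hSm]
    congr 1 with x
    by_cases hx : x ∈ S
    · rw [hq, Set.indicator_of_mem hx, Set.indicator_of_mem hx,
        show ((2:ℝ)) = ((2:ℕ):ℝ) by norm_num, Real.rpow_natCast, Real.norm_eq_abs, sq_abs]
    · rw [hq, Set.indicator_of_notMem hx, Set.indicator_of_notMem hx, norm_zero]
      rw [Real.zero_rpow (by norm_num)]
  have h3 : ∫ x, ‖g x‖ ^ (2:ℝ) ∂volume = ∫ x, g x ^ 2 := by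
    congr 1 with x
    rw [show ((2:ℝ)) = ((2:ℕ):ℝ) by norm_num, Real.rpow_natCast, Real.norm_eq_abs, sq_abs]
  rw [h2, h3] at key
  calc ∫ x, p x * g x ≤ ∫ x, ‖q x‖ * ‖g x‖ := h1
    _ ≤ (∫ x in S, p x ^ 2) ^ (1/2:ℝ) * (∫ x, g x ^ 2) ^ (1/2:ℝ) := key
    _ = Real.sqrt (∫ x in S, p x ^ 2) * Real.sqrt (∫ x, g x ^ 2) := by
        rw [Real.sqrt_eq_rpow, Real.sqrt_eq_rpow]


/-- Quantitative core of the incompressible-limit error estimate (`ω = 0` case):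
if `λ ≥ λ_min > 0`, `μ ≥ μ_min > 0`, `w` is smooth and compactly supported, and
`∇(λ div w) + ∇·(μ E(w)) = ∇p` on `ℝ^d`, then with `P = (∫_{supp w} p²)^{1/2}` one has
`(∫ (div w)²)^{1/2} ≤ P/λ_min` and `∫ |∇w|² ≤ P²/(μ_min λ_min)`. -/
theorem error_estimate_core (d : ℕ) (hd : 1 ≤ d)
    (lammin μmin : ℝ) (hlammin : 0 < lammin) (hμmin : 0 < μmin)
    (lam μ p : (Fin d → ℝ) → ℝ)
    (hlam : ContDiff ℝ 1 lam) (hμ : ContDiff ℝ 1 μ) (hp : ContDiff ℝ 1 p)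
    (hllb : ∀ x, lammin ≤ lam x) (hμlb : ∀ x, μmin ≤ μ x)
    (w : (Fin d → ℝ) → (Fin d → ℝ)) (hw : ContDiff ℝ (⊤ : ℕ∞) w) (hcw : HasCompactSupport w)
    (heq : ∀ x : Fin d → ℝ,
      gradf (fun y => lam y * divg w y) x
        + divMat (fun y => μ y • Ef w y) x = gradf p x)
    (P : ℝ) (hP : P = Real.sqrt (∫ x in tsupport w, (p x) ^ 2)) :
    Real.sqrt (∫ x : Fin d → ℝ, (divg w x) ^ 2) ≤ P / lammin ∧
      ∫ x : Fin d → ℝ, frob (jac w x) (jac w x) ≤ P ^ 2 / (μmin * lammin) := by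
  -- basic facts on `aent`
  have conta : ∀ i j, Continuous (aent w i j) := fun i j => (aent_contDiff hw i j).continuous
  have hdivg_eq : divg w = fun x => ∑ i, aent w i i x := by
    funext x; unfold divg; exact Finset.sum_congr rfl fun i _ => jac_aent hw x i i
  have hdivgC : ContDiff ℝ 1 (divg w) := by
    rw [hdivg_eq]; exact ContDiff.sum fun i _ => aent_contDiff hw i i
  have hdivg0 : ∀ x, x ∉ tsupport w → divg w x = 0 := by
    intro x hx
    rw [hdivg_eq]
    exact Finset.sum_eq_zero fun i _ => aent_zero i i hx
  have hEfe : ∀ x i j, Ef w x i j = aent w i j x + aent w j i x := by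
    intro x i j
    show (jac w x + (jac w x)ᵀ) i j = _
    rw [Matrix.add_apply, Matrix.transpose_apply, jac_aent hw, jac_aent hw]
  have hF : ContDiff ℝ 1 (fun y => lam y * divg w y) := hlam.mul hdivgC
  set G : Fin d → Fin d → (Fin d → ℝ) → ℝ :=
    fun i j x => μ x * (aent w i j x + aent w j i x) with hGdef
  have hG1 : ∀ i j, ContDiff ℝ 1 (G i j) := fun i j =>
    hμ.mul ((aent_contDiff hw i j).add (aent_contDiff hw j i))
  have key_int : ∀ {f : (Fin d → ℝ) → ℝ}, Continuous f →
      (∀ x, x ∉ tsupport w → f x = 0) → Integrable f :=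
    fun hf h0 => integ_helper hcw hf h0
  -- the pointwise PDE, componentwise
  have heq' : ∀ x i, fderiv ℝ (fun y => lam y * divg w y) x (Pi.single i 1)
      + ∑ j, fderiv ℝ (G i j) x (Pi.single j 1) = fderiv ℝ p x (Pi.single i 1) := by
    intro x i
    have h := congrFun (heq x) i
    simp only [Pi.add_apply, gradf, divMat] at h
    have hMij : ∀ (i j : Fin d), (fun y => (μ y • Ef w y) i j) = G i j := by
      intro i j
      funext y
      rw [Matrix.smul_apply, smul_eq_mul, hEfe y i j]
    simp only [hMij] at h
    exact h
  -- integrability bank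
  have int1 : ∀ i, Integrable fun x => (lam x * divg w x) * aent w i i x := fun i =>
    key_int (((hlam.continuous).mul hdivgC.continuous).mul (conta i i))
      (fun x hx => by rw [aent_zero i i hx, mul_zero])
  have int2 : ∀ i j, Integrable fun x => G i j x * aent w i j x := fun i j =>
    key_int ((hG1 i j).continuous.mul (conta i j))
      (fun x hx => by rw [aent_zero i j hx, mul_zero])
  have int3 : ∀ i, Integrable fun x => p x * aent w i i x := fun i =>
    key_int ((hp.continuous).mul (conta i i))
      (fun x hx => by rw [aent_zero i i hx, mul_zero])
  have hwic : ∀ i, Continuous fun x => w x i := fun i => (wi_contDiff hw i 1 (WithTop.coe_le_coe.mpr le_top)).continuous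
  have int_fF : ∀ i, Integrable fun x =>
      fderiv ℝ (fun y => lam y * divg w y) x (Pi.single i 1) * w x i := fun i =>
    key_int (((hF.continuous_fderiv one_ne_zero).clm_apply continuous_const).mul (hwic i))
      (fun x hx => by rw [wi_zero i hx, mul_zero])
  have int_fG : ∀ i j, Integrable fun x =>
      fderiv ℝ (G i j) x (Pi.single j 1) * w x i := fun i j =>
    key_int ((((hG1 i j).continuous_fderiv one_ne_zero).clm_apply continuous_const).mul (hwic i))
      (fun x hx => by rw [wi_zero i hx, mul_zero])
  have int_aa : ∀ i j k l, Integrable fun x => aent w i j x * aent w k l x := fun i j k l =>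
    key_int ((conta i j).mul (conta k l))
      (fun x hx => by rw [aent_zero i j hx, zero_mul])
  -- per-component integral identity
  have hi : ∀ i, (∫ x, (lam x * divg w x) * aent w i i x)
      + ∑ j, ∫ x, G i j x * aent w i j x = ∫ x, p x * aent w i i x := by
    intro i
    have hA := ibp_w hw hcw hF i i
    have hB : ∀ j, ∫ x, fderiv ℝ (G i j) x (Pi.single j 1) * w x i
        = - ∫ x, G i j x * aent w i j x := fun j => ibp_w hw hcw (hG1 i j) i j
    have hC := ibp_w hw hcw hp i i
    have hsum : ∫ x, (fderiv ℝ (fun y => lam y * divg w y) x (Pi.single i 1)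
        + ∑ j, fderiv ℝ (G i j) x (Pi.single j 1)) * w x i
        = ∫ x, fderiv ℝ p x (Pi.single i 1) * w x i := by
      exact integral_congr_ae (Filter.Eventually.of_forall fun x => by
        dsimp only; rw [heq' x i])
    have hlhs : ∫ x, (fderiv ℝ (fun y => lam y * divg w y) x (Pi.single i 1)
        + ∑ j, fderiv ℝ (G i j) x (Pi.single j 1)) * w x i
        = (∫ x, fderiv ℝ (fun y => lam y * divg w y) x (Pi.single i 1) * w x i)
          + ∑ j, ∫ x, fderiv ℝ (G i j) x (Pi.single j 1) * w x i := by
      rw [integral_congr_ae (Filter.Eventually.of_forall (fun x => by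
        rw [add_mul, Finset.sum_mul] :
        ∀ x, (fderiv ℝ (fun y => lam y * divg w y) x (Pi.single i 1)
          + ∑ j, fderiv ℝ (G i j) x (Pi.single j 1)) * w x i
          = fderiv ℝ (fun y => lam y * divg w y) x (Pi.single i 1) * w x i
            + ∑ j, fderiv ℝ (G i j) x (Pi.single j 1) * w x i))]
      rw [integral_add (int_fF i) (integrable_finset_sum _ fun j _ => int_fG i j),
        integral_finset_sum _ fun j _ => int_fG i j]
    rw [hlhs, hA, hC] at hsum
    rw [Finset.sum_congr rfl fun j _ => hB j, Finset.sum_neg_distrib] at hsum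
    linarith [hsum]
  -- sum over i : the energy identity
  have e1 : ∑ i, ∫ x, (lam x * divg w x) * aent w i i x
      = ∫ x, lam x * (divg w x)^2 := by
    rw [← integral_finset_sum _ (fun i _ => int1 i)]
    have hpt : ∀ x, ∑ i, (lam x * divg w x) * aent w i i x = lam x * (divg w x)^2 := by
      intro x
      rw [← Finset.mul_sum]
      have hx := congrFun hdivg_eq x
      rw [← hx]
      ring
    exact integral_congr_ae (Filter.Eventually.of_forall hpt)
  have e3 : ∑ i, ∫ x, p x * aent w i i x = ∫ x, p x * divg w x := by
    rw [← integral_finset_sum _ (fun i _ => int3 i)]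
    have hpt : ∀ x, ∑ i, p x * aent w i i x = p x * divg w x := by
      intro x
      rw [← Finset.mul_sum]
      have hx := congrFun hdivg_eq x
      rw [← hx]
    exact integral_congr_ae (Filter.Eventually.of_forall hpt)
  have e2 : ∑ i, ∑ j, ∫ x, G i j x * aent w i j x
      = ∫ x, μ x * frob (jac w x) (Ef w x) := by
    rw [Finset.sum_congr rfl fun i _ => (integral_finset_sum _ (fun j _ => int2 i j)).symm,
      ← integral_finset_sum _ (fun i _ => integrable_finset_sum _ (fun j _ => int2 i j))]
    refine integral_congr_ae (Filter.Eventually.of_forall fun x => ?_)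
    dsimp only
    unfold frob
    rw [Finset.mul_sum]
    refine Finset.sum_congr rfl fun i _ => ?_
    rw [Finset.mul_sum]
    refine Finset.sum_congr rfl fun j _ => ?_
    rw [jac_aent hw, hEfe]
    simp only [hGdef]
    ring
  have star : (∫ x, lam x * (divg w x)^2)
      + (∫ x, μ x * frob (jac w x) (Ef w x)) = ∫ x, p x * divg w x := by
    have hsumi : ∑ i, ((∫ x, (lam x * divg w x) * aent w i i x)
        + ∑ j, ∫ x, G i j x * aent w i j x) = ∑ i, ∫ x, p x * aent w i i x :=
      Finset.sum_congr rfl fun i _ => hi i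
    rw [Finset.sum_add_distrib, e1, e2, e3] at hsumi
    exact hsumi
  -- pointwise descriptions of frobenius quantities
  have hfrobE_fun : ∀ x, frob (jac w x) (Ef w x)
      = ∑ i, ∑ j, aent w i j x * (aent w i j x + aent w j i x) := by
    intro x
    unfold frob
    refine Finset.sum_congr rfl fun i _ => Finset.sum_congr rfl fun j _ => ?_
    rw [jac_aent hw, hEfe]
  have hfrobjj_fun : ∀ x, frob (jac w x) (jac w x)
      = ∑ i, ∑ j, aent w i j x * aent w i j x := by
    intro x
    unfold frob
    refine Finset.sum_congr rfl fun i _ => Finset.sum_congr rfl fun j _ => ?_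
    rw [jac_aent hw]
  have int_frobE : Integrable fun x => frob (jac w x) (Ef w x) := by
    rw [show (fun x => frob (jac w x) (Ef w x))
        = fun x => ∑ i, ∑ j, aent w i j x * (aent w i j x + aent w j i x)
      from funext hfrobE_fun]
    refine integrable_finset_sum _ fun i _ => integrable_finset_sum _ fun j _ => ?_
    exact key_int ((conta i j).mul ((conta i j).add (conta j i)))
      (fun x hx => by rw [aent_zero i j hx, zero_mul])
  have int_frobjj : Integrable fun x => frob (jac w x) (jac w x) := by
    rw [show (fun x => frob (jac w x) (jac w x))
        = fun x => ∑ i, ∑ j, aent w i j x * aent w i j x from funext hfrobjj_fun]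
    exact integrable_finset_sum _ fun i _ => integrable_finset_sum _ fun j _ =>
      key_int ((conta i j).mul (conta i j)) (fun x hx => by rw [aent_zero i j hx, zero_mul])
  have int_mufrobE : Integrable fun x => μ x * frob (jac w x) (Ef w x) := by
    rw [show (fun x => μ x * frob (jac w x) (Ef w x))
        = fun x => μ x * ∑ i, ∑ j, aent w i j x * (aent w i j x + aent w j i x) from
      funext fun x => by rw [hfrobE_fun x]]
    refine key_int (hμ.continuous.mul ?_) (fun x hx => ?_)
    · exact continuous_finset_sum _ fun i _ => continuous_finset_sum _ fun j _ =>
        (conta i j).mul ((conta i j).add (conta j i))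
    · rw [Finset.sum_eq_zero fun i _ => Finset.sum_eq_zero fun j _ => by
        rw [aent_zero i j hx, zero_mul], mul_zero]
  have int_lam2 : Integrable fun x => lam x * (divg w x)^2 :=
    key_int (hlam.continuous.mul (hdivgC.continuous.pow 2))
      (fun x hx => by rw [hdivg0 x hx]; ring)
  have int_d2 : Integrable fun x => (divg w x)^2 :=
    key_int (hdivgC.continuous.pow 2) (fun x hx => by rw [hdivg0 x hx]; ring)
  set D2 := ∫ x, (divg w x)^2 with hD2def
  have hD2 : 0 ≤ D2 := integral_nonneg fun x => sq_nonneg _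
  have hfrob_nonneg : ∀ x, 0 ≤ frob (jac w x) (Ef w x) := fun x => frob_Ef_nonneg (jac w x)
  have h1 : lammin * D2 ≤ ∫ x, lam x * (divg w x)^2 := by
    rw [hD2def, ← integral_const_mul]
    exact integral_mono (int_d2.const_mul lammin) int_lam2
      (fun x => mul_le_mul_of_nonneg_right (hllb x) (sq_nonneg _))
  have h2 : 0 ≤ ∫ x, μ x * frob (jac w x) (Ef w x) :=
    integral_nonneg fun x => mul_nonneg (hμmin.le.trans (hμlb x)) (hfrob_nonneg x)
  have h3 : μmin * (∫ x, frob (jac w x) (Ef w x))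
      ≤ ∫ x, μ x * frob (jac w x) (Ef w x) := by
    rw [← integral_const_mul]
    exact integral_mono (int_frobE.const_mul μmin) int_mufrobE
      (fun x => mul_le_mul_of_nonneg_right (hμlb x) (hfrob_nonneg x))
  have hCS : ∫ x, p x * divg w x ≤ P * Real.sqrt D2 := by
    rw [hP, hD2def]
    exact cs_bound hp.continuous hdivgC.continuous (tsupport w) hcw
      (isClosed_tsupport w) hdivg0
  have hP0 : 0 ≤ P := by rw [hP]; exact Real.sqrt_nonneg _
  have hchain : lammin * D2 ≤ P * Real.sqrt D2 := by
    have := h1.trans (by linarith [star, h2] :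
      (∫ x, lam x * (divg w x)^2) ≤ ∫ x, p x * divg w x)
    exact this.trans hCS
  have part1 : Real.sqrt D2 ≤ P / lammin := by
    rcases eq_or_lt_of_le (Real.sqrt_nonneg D2) with h0 | h0
    · rw [← h0]; positivity
    · rw [le_div_iff₀ hlammin]
      have hms : Real.sqrt D2 * Real.sqrt D2 = D2 := Real.mul_self_sqrt hD2
      nlinarith [hchain, h0]
  refine ⟨part1, ?_⟩
  -- second derivative / Korn step
  have crossSum : ∑ i, ∑ j, (∫ x, aent w i j x * aent w j i x) = D2 := by
    rw [Finset.sum_congr rfl fun i _ => Finset.sum_congr rfl fun j _ => cross_ibp hw hcw i j,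
      Finset.sum_congr rfl fun i _ => (integral_finset_sum _ fun j _ => int_aa i i j j).symm,
      ← integral_finset_sum _ (fun i _ => integrable_finset_sum _ fun j _ => int_aa i i j j),
      hD2def]
    have hpt : ∀ x, ∑ i, ∑ j, aent w i i x * aent w j j x = (divg w x)^2 := by
      intro x
      have hx := congrFun hdivg_eq x
      rw [hx, sq, Finset.sum_mul_sum]
    exact integral_congr_ae (Filter.Eventually.of_forall hpt)
  have hsplit : (∫ x, frob (jac w x) (jac w x))
      = (∫ x, frob (jac w x) (Ef w x)) - D2 := by
    rw [← crossSum]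
    have pt : ∀ x, frob (jac w x) (jac w x)
        = frob (jac w x) (Ef w x) - ∑ i, ∑ j, aent w i j x * aent w j i x := by
      intro x
      rw [hfrobjj_fun x, hfrobE_fun x, ← Finset.sum_sub_distrib]
      refine Finset.sum_congr rfl fun i _ => ?_
      rw [← Finset.sum_sub_distrib]
      refine Finset.sum_congr rfl fun j _ => ?_
      ring
    rw [integral_congr_ae (Filter.Eventually.of_forall pt),
      integral_sub int_frobE (integrable_finset_sum _ fun i _ =>
        integrable_finset_sum _ fun j _ => int_aa i j j i),
      integral_finset_sum _ (fun i _ => integrable_finset_sum _ fun j _ => int_aa i j j i),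
      Finset.sum_congr rfl fun i _ => integral_finset_sum _ fun j _ => int_aa i j j i]
  have hfle : (∫ x, frob (jac w x) (jac w x)) ≤ ∫ x, frob (jac w x) (Ef w x) := by
    rw [hsplit]; linarith
  have hJ : μmin * (∫ x, frob (jac w x) (Ef w x)) ≤ P * (P / lammin) := by
    have hup : ∫ x, μ x * frob (jac w x) (Ef w x) ≤ P * Real.sqrt D2 := by
      have hnn : 0 ≤ ∫ x, lam x * (divg w x)^2 := le_trans (by positivity) h1
      linarith [star, hCS]
    have hlast : P * Real.sqrt D2 ≤ P * (P / lammin) :=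
      mul_le_mul_of_nonneg_left part1 hP0
    linarith [h3]
  have hml : 0 < μmin * lammin := by positivity
  rw [le_div_iff₀ hml]
  have hPP : P * (P / lammin) * lammin = P ^ 2 := by field_simp
  nlinarith [hJ, hfle, hlammin, hμmin, hD2]
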